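/- The divergence of the Fierz tensor in its last index vanishes identically: ∂_c F_{ab}{}^c = 0 for every smooth symmetric field h_{ab}. -/

import Mathlib

noncomputable section

/-- Minkowski metric `diag(+1,-1,-1,-1)` on `Fin 4` (same matrix raises/lowers indices). -/
def eta (a b : Fin 4) : ℝ := if a = b then (if a = 0 then 1 else -1) else 0

/-- Partial derivative in the coordinate direction `a` on `ℝ⁴ = (Fin 4 → ℝ)`. -/
def pd (a : Fin 4) (f : (Fin 4 → ℝ) → ℝ) : (Fin 4 → ℝ) → ℝ :=
  fun x => fderiv ℝ f x (Pi.single a 1)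

/-- Trace `h = η^{ab} h_{ab}`. -/
def trH (h : (Fin 4 → ℝ) → Fin 4 → Fin 4 → ℝ) : (Fin 4 → ℝ) → ℝ :=
  fun x => ∑ a : Fin 4, ∑ b : Fin 4, eta a b * h x a b

/-- Divergence `∂_d h^d{}_a`. -/
def divH (h : (Fin 4 → ℝ) → Fin 4 → Fin 4 → ℝ) (a : Fin 4) : (Fin 4 → ℝ) → ℝ :=
  fun x => ∑ d : Fin 4, ∑ d' : Fin 4, eta d d' * pd d (fun y => h y d' a) x

/-- The Fierz tensor of `h_{ab}`. -/
def Fierz (h : (Fin 4 → ℝ) → Fin 4 → Fin 4 → ℝ) (a b c : Fin 4) : (Fin 4 → ℝ) → ℝ :=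
  fun x => (1/2) * (pd a (fun y => h y b c) x - pd b (fun y => h y a c) x
    + divH h a x * eta b c - divH h b x * eta a c
    - pd a (trH h) x * eta b c + pd b (trH h) x * eta a c)

/-! ### Auxiliary lemmas -/

lemma contDiff_pd {f : (Fin 4 → ℝ) → ℝ} (hf : ContDiff ℝ (⊤ : ℕ∞) f) (a : Fin 4) :
    ContDiff ℝ (⊤ : ℕ∞) (pd a f) := by
  have h1 : ContDiff ℝ (⊤ : ℕ∞) (fderiv ℝ f) := hf.fderiv_right (by simp)
  exact (ContinuousLinearMap.apply ℝ ℝ (Pi.single a 1 : Fin 4 → ℝ)).contDiff.comp h1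

lemma pd_comm {f : (Fin 4 → ℝ) → ℝ} (hf : ContDiff ℝ (⊤ : ℕ∞) f) (a b : Fin 4) (x : Fin 4 → ℝ) :
    pd a (pd b f) x = pd b (pd a f) x := by
  have hd : ∀ y, HasFDerivAt f (fderiv ℝ f y) y :=
    fun y => (hf.differentiable (by simp) y).hasFDerivAt
  have h2 : HasFDerivAt (fderiv ℝ f) (fderiv ℝ (fderiv ℝ f) x) x :=
    (((hf.fderiv_right (m := (⊤ : ℕ∞)) (by simp)).differentiable (by simp)) x).hasFDerivAt
  have hsymm := second_derivative_symmetric hd h2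
  have key : ∀ v w : Fin 4 → ℝ,
      fderiv ℝ (fun y => fderiv ℝ f y v) x w = fderiv ℝ (fderiv ℝ f) x w v := by
    intro v w
    rw [fderiv_clm_apply h2.differentiableAt (differentiableAt_const v)]
    simp
  show fderiv ℝ (fun y => fderiv ℝ f y (Pi.single b 1)) x (Pi.single a 1)
      = fderiv ℝ (fun y => fderiv ℝ f y (Pi.single a 1)) x (Pi.single b 1)
  rw [key, key]
  exact hsymm _ _

lemma pd_sum {ι : Type*} (s : Finset ι) (f : ι → (Fin 4 → ℝ) → ℝ) (a : Fin 4) (x : Fin 4 → ℝ)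
    (hf : ∀ i ∈ s, DifferentiableAt ℝ (f i) x) :
    pd a (fun y => ∑ i ∈ s, f i y) x = ∑ i ∈ s, pd a (f i) x := by
  show fderiv ℝ (fun y => ∑ i ∈ s, f i y) x (Pi.single a 1) = _
  rw [fderiv_fun_sum hf]
  simp [pd]

lemma pd_const_mul {f : (Fin 4 → ℝ) → ℝ} {x : Fin 4 → ℝ} (hf : DifferentiableAt ℝ f x)
    (c : ℝ) (a : Fin 4) :
    pd a (fun y => c * f y) x = c * pd a f x := by
  show fderiv ℝ (fun y => c * f y) x (Pi.single a 1) = _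
  rw [fderiv_const_mul hf c]
  simp [pd]

lemma eta_contract (c b : Fin 4) : (∑ c' : Fin 4, eta c c' * eta b c') = if c = b then 1 else 0 := by
  fin_cases c <;> fin_cases b <;> simp [eta, Fin.sum_univ_four]

lemma pd_expand {f1 f2 f3 f4 f5 f6 : (Fin 4 → ℝ) → ℝ} (x : Fin 4 → ℝ)
    (h1 : DifferentiableAt ℝ f1 x) (h2 : DifferentiableAt ℝ f2 x)
    (h3 : DifferentiableAt ℝ f3 x) (h4 : DifferentiableAt ℝ f4 x)
    (h5 : DifferentiableAt ℝ f5 x) (h6 : DifferentiableAt ℝ f6 x)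
    (c : Fin 4) (e1 e2 : ℝ) :
    pd c (fun y => (1/2) * (f1 y - f2 y + f3 y * e1 - f4 y * e2 - f5 y * e1 + f6 y * e2)) x
      = (1/2) * (pd c f1 x - pd c f2 x + pd c f3 x * e1 - pd c f4 x * e2
          - pd c f5 x * e1 + pd c f6 x * e2) := by
  have H : HasFDerivAt
      (fun y => (1/2 : ℝ) * (f1 y - f2 y + f3 y * e1 - f4 y * e2 - f5 y * e1 + f6 y * e2))
      ((1/2 : ℝ) • (fderiv ℝ f1 x - fderiv ℝ f2 x + e1 • fderiv ℝ f3 x - e2 • fderiv ℝ f4 x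
        - e1 • fderiv ℝ f5 x + e2 • fderiv ℝ f6 x)) x := by
    exact ((((((h1.hasFDerivAt.sub h2.hasFDerivAt).add (h3.hasFDerivAt.mul_const e1)).sub
      (h4.hasFDerivAt.mul_const e2)).sub (h5.hasFDerivAt.mul_const e1)).add
      (h6.hasFDerivAt.mul_const e2)).const_mul _)
  show fderiv ℝ _ x (Pi.single c 1) = _
  rw [H.fderiv]
  simp only [ContinuousLinearMap.smul_apply, ContinuousLinearMap.add_apply,
    ContinuousLinearMap.sub_apply, smul_eq_mul, pd]
  ring

/-- `∂_c F_{ab}{}^c = 0` identically. -/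
theorem fierz_divergence_last_index
    (h : (Fin 4 → ℝ) → Fin 4 → Fin 4 → ℝ)
    (hsm : ∀ a b : Fin 4, ContDiff ℝ (⊤ : ℕ∞) fun x => h x a b)
    (hsym : ∀ x, ∀ a b : Fin 4, h x a b = h x b a) :
    ∀ x, ∀ a b : Fin 4,
      (∑ c : Fin 4, ∑ c' : Fin 4, eta c c' * pd c (fun y => Fierz h a b c' y) x) = 0 := by
  intro x a b
  have htr : ContDiff ℝ (⊤ : ℕ∞) (trH h) := by
    apply ContDiff.sum; intro i _
    apply ContDiff.sum; intro j _
    exact contDiff_const.mul (hsm i j)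
  have hdiv : ∀ i : Fin 4, ContDiff ℝ (⊤ : ℕ∞) (divH h i) := by
    intro i
    apply ContDiff.sum; intro d _
    apply ContDiff.sum; intro d' _
    exact contDiff_const.mul (contDiff_pd (hsm d' i) d)
  -- differentiability shortcuts
  have dH : ∀ (i j c : Fin 4) (y : Fin 4 → ℝ),
      DifferentiableAt ℝ (pd c (fun z => h z i j)) y :=
    fun i j c y => ((contDiff_pd (hsm i j) c).differentiable (by simp)) y
  have dDiv : ∀ (i c : Fin 4) (y : Fin 4 → ℝ), DifferentiableAt ℝ (divH h i) y :=
    fun i c y => ((hdiv i).differentiable (by simp)) y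
  have dTr : ∀ (c : Fin 4) (y : Fin 4 → ℝ), DifferentiableAt ℝ (pd c (trH h)) y :=
    fun c y => ((contDiff_pd htr c).differentiable (by simp)) y
  -- Step 1: expand the derivative of the Fierz tensor
  have step1 : ∀ c c' : Fin 4, pd c (fun y => Fierz h a b c' y) x
      = (1/2) * (pd c (pd a (fun y => h y b c')) x - pd c (pd b (fun y => h y a c')) x
        + pd c (divH h a) x * eta b c' - pd c (divH h b) x * eta a c'
        - pd c (pd a (trH h)) x * eta b c' + pd c (pd b (trH h)) x * eta a c') := by
    intro c c'
    exact pd_expand x (dH b c' a x) (dH a c' b x) (dDiv a c x) (dDiv b c x)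
      (dTr a x) (dTr b x) c (eta b c') (eta a c')
  -- The six contracted double sums
  have SA : (∑ c : Fin 4, ∑ c' : Fin 4, eta c c' * pd c (pd a (fun y => h y b c')) x)
      = pd a (divH h b) x := by
    have e1 : pd a (divH h b) x
        = ∑ c : Fin 4, ∑ c' : Fin 4, eta c c' * pd a (pd c (fun y => h y c' b)) x := by
      have := pd_sum (Finset.univ : Finset (Fin 4))
        (fun d y => ∑ d' : Fin 4, eta d d' * pd d (fun z => h z d' b) y) a x
        (fun d _ => by
          apply DifferentiableAt.fun_sum; intro d' _
          exact (differentiableAt_const _).mul (dH d' b d x))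
      rw [show divH h b = fun y => ∑ d : Fin 4, ∑ d' : Fin 4,
            eta d d' * pd d (fun z => h z d' b) y from rfl, this]
      refine Finset.sum_congr rfl fun c _ => ?_
      rw [pd_sum (Finset.univ : Finset (Fin 4))
        (fun d' y => eta c d' * pd c (fun z => h z d' b) y) a x
        (fun d' _ => (differentiableAt_const _).mul (dH d' b c x))]
      refine Finset.sum_congr rfl fun c' _ => ?_
      exact pd_const_mul (dH c' b c x) (eta c c') a
    rw [e1]
    refine Finset.sum_congr rfl fun c _ => Finset.sum_congr rfl fun c' _ => ?_
    have hfun : (fun y => h y c' b) = (fun y => h y b c') := by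
      funext y; exact hsym y c' b
    rw [hfun, pd_comm (hsm b c') a c x]
  have SB : (∑ c : Fin 4, ∑ c' : Fin 4, eta c c' * pd c (pd b (fun y => h y a c')) x)
      = pd b (divH h a) x := by
    have e1 : pd b (divH h a) x
        = ∑ c : Fin 4, ∑ c' : Fin 4, eta c c' * pd b (pd c (fun y => h y c' a)) x := by
      have := pd_sum (Finset.univ : Finset (Fin 4))
        (fun d y => ∑ d' : Fin 4, eta d d' * pd d (fun z => h z d' a) y) b x
        (fun d _ => by
          apply DifferentiableAt.fun_sum; intro d' _
          exact (differentiableAt_const _).mul (dH d' a d x))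
      rw [show divH h a = fun y => ∑ d : Fin 4, ∑ d' : Fin 4,
            eta d d' * pd d (fun z => h z d' a) y from rfl, this]
      refine Finset.sum_congr rfl fun c _ => ?_
      rw [pd_sum (Finset.univ : Finset (Fin 4))
        (fun d' y => eta c d' * pd c (fun z => h z d' a) y) b x
        (fun d' _ => (differentiableAt_const _).mul (dH d' a c x))]
      refine Finset.sum_congr rfl fun c' _ => ?_
      exact pd_const_mul (dH c' a c x) (eta c c') b
    rw [e1]
    refine Finset.sum_congr rfl fun c _ => Finset.sum_congr rfl fun c' _ => ?_
    have hfun : (fun y => h y c' a) = (fun y => h y a c') := by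
      funext y; exact hsym y c' a
    rw [hfun, pd_comm (hsm a c') b c x]
  have contract : ∀ (g : Fin 4 → ℝ) (i : Fin 4),
      (∑ c : Fin 4, ∑ c' : Fin 4, eta c c' * (g c * eta i c')) = g i := by
    intro g i
    have e1 : ∀ c : Fin 4, (∑ c' : Fin 4, eta c c' * (g c * eta i c'))
        = (if c = i then (1:ℝ) else 0) * g c := by
      intro c
      rw [← eta_contract c i, Finset.sum_mul]
      exact Finset.sum_congr rfl fun c' _ => by ring
    simp_rw [e1]
    simp [Finset.sum_ite_eq']
  have SC : (∑ c : Fin 4, ∑ c' : Fin 4, eta c c' * (pd c (divH h a) x * eta b c'))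
      = pd b (divH h a) x := contract (fun c => pd c (divH h a) x) b
  have SD : (∑ c : Fin 4, ∑ c' : Fin 4, eta c c' * (pd c (divH h b) x * eta a c'))
      = pd a (divH h b) x := contract (fun c => pd c (divH h b) x) a
  have SE : (∑ c : Fin 4, ∑ c' : Fin 4, eta c c' * (pd c (pd a (trH h)) x * eta b c'))
      = pd b (pd a (trH h)) x := contract (fun c => pd c (pd a (trH h)) x) b
  have SF : (∑ c : Fin 4, ∑ c' : Fin 4, eta c c' * (pd c (pd b (trH h)) x * eta a c'))
      = pd a (pd b (trH h)) x := contract (fun c => pd c (pd b (trH h)) x) a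
  have key : ∀ c c' : Fin 4, eta c c' * pd c (fun y => Fierz h a b c' y) x
      = (1/2) * (eta c c' * pd c (pd a (fun y => h y b c')) x)
        - (1/2) * (eta c c' * pd c (pd b (fun y => h y a c')) x)
        + (1/2) * (eta c c' * (pd c (divH h a) x * eta b c'))
        - (1/2) * (eta c c' * (pd c (divH h b) x * eta a c'))
        - (1/2) * (eta c c' * (pd c (pd a (trH h)) x * eta b c'))
        + (1/2) * (eta c c' * (pd c (pd b (trH h)) x * eta a c')) := by
    intro c c'
    rw [step1 c c']; ring
  have split : ∀ (p q r s t u : Fin 4 → Fin 4 → ℝ),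
      (∑ c : Fin 4, ∑ c' : Fin 4,
        (p c c' - q c c' + r c c' - s c c' - t c c' + u c c'))
      = (∑ c : Fin 4, ∑ c' : Fin 4, p c c') - (∑ c : Fin 4, ∑ c' : Fin 4, q c c')
        + (∑ c : Fin 4, ∑ c' : Fin 4, r c c') - (∑ c : Fin 4, ∑ c' : Fin 4, s c c')
        - (∑ c : Fin 4, ∑ c' : Fin 4, t c c') + (∑ c : Fin 4, ∑ c' : Fin 4, u c c') := by
    intro p q r s t u
    simp [Finset.sum_add_distrib, Finset.sum_sub_distrib]
  have lhs_eq : (∑ c : Fin 4, ∑ c' : Fin 4, eta c c' * pd c (fun y => Fierz h a b c' y) x)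
      = ∑ c : Fin 4, ∑ c' : Fin 4,
        ((1/2) * (eta c c' * pd c (pd a (fun y => h y b c')) x)
          - (1/2) * (eta c c' * pd c (pd b (fun y => h y a c')) x)
          + (1/2) * (eta c c' * (pd c (divH h a) x * eta b c'))
          - (1/2) * (eta c c' * (pd c (divH h b) x * eta a c'))
          - (1/2) * (eta c c' * (pd c (pd a (trH h)) x * eta b c'))
          + (1/2) * (eta c c' * (pd c (pd b (trH h)) x * eta a c'))) :=
    Finset.sum_congr rfl fun c _ => Finset.sum_congr rfl fun c' _ => key c c'
  rw [lhs_eq, split]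
  simp_rw [← Finset.mul_sum]
  rw [SA, SB, SC, SD, SE, SF, pd_comm htr a b x]
  ring
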